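/- arXiv:math/0211112 — 3 statements merged into one kernel-verified Lean document; each statement's English description precedes it below -/
import Mathlib

section
/- Let A and B be compact subsets of a metric space X such that closure(A \ B) ∩ closure(B \ A) = ∅. Then there exists r₀ > 0 such that for all 0 < r ≤ r₀, A(r) ∩ B(r) = (A ∩ B)(r), where S(r) denotes the open r-neighborhood of S. -/
/-- If `A`, `B` are compact and `closure (A \ B)` and `closure (B \ A)` are disjoint, then
for all sufficiently small `r > 0` we have `A(r) ∩ B(r) = (A ∩ B)(r)` for the open
`r`-neighborhoods. -/
theorem stmt_3 {X : Type*} [MetricSpace X] (A B : Set X)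
    (hA : IsCompact A) (hB : IsCompact B)
    (h : closure (A \ B) ∩ closure (B \ A) = ∅) :
    ∃ r₀ > 0, ∀ r : ℝ, 0 < r → r ≤ r₀ →
      {x : X | ∃ y ∈ A, dist x y < r} ∩ {x : X | ∃ y ∈ B, dist x y < r} =
        {x : X | ∃ y ∈ A ∩ B, dist x y < r} := by
  have hdisj : Disjoint (closure (A \ B)) (closure (B \ A)) :=
    Set.disjoint_iff_inter_eq_empty.mpr h
  have hK : IsCompact (closure (A \ B)) :=
    hA.of_isClosed_subset isClosed_closure
      ((closure_minimal Set.diff_subset hA.isClosed))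
  obtain ⟨δ, hδ, hd⟩ := hdisj.exists_thickenings hK isClosed_closure
  refine ⟨δ, hδ, fun r hr hrδ => ?_⟩
  ext x
  simp only [Set.mem_inter_iff, Set.mem_setOf_eq]
  constructor
  · rintro ⟨⟨a, ha, hxa⟩, ⟨b, hb, hxb⟩⟩
    by_cases haB : a ∈ B
    · exact ⟨a, ⟨ha, haB⟩, hxa⟩
    by_cases hbA : b ∈ A
    · exact ⟨b, ⟨hbA, hb⟩, hxb⟩
    exfalso
    have hx1 : x ∈ Metric.thickening δ (closure (A \ B)) :=
      Metric.mem_thickening_iff.mpr ⟨a, subset_closure ⟨ha, haB⟩, lt_of_lt_of_le hxa hrδ⟩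
    have hx2 : x ∈ Metric.thickening δ (closure (B \ A)) :=
      Metric.mem_thickening_iff.mpr ⟨b, subset_closure ⟨hb, hbA⟩, lt_of_lt_of_le hxb hrδ⟩
    exact hd.ne_of_mem hx1 hx2 rfl
  · rintro ⟨y, ⟨hyA, hyB⟩, hxy⟩
    exact ⟨⟨y, hyA, hxy⟩, ⟨y, hyB, hxy⟩⟩
end

section
/- Let A be a real symmetric positive definite n×n matrix whose smallest eigenvalue is λ₁ > 0, let I ⊆ ℝ₊ be an interval, and let h : I → ℝ be twice continuously differentiable satisfying h'(t) < λ₁ and 2t·h''(t) + h'(t) < λ₁ for all t ∈ I. Then the function τ(z) = ⟨A y, y⟩ − h(|x|²), defined for z = x + iy ∈ ℂⁿ with |x|² ∈ I, has positive definite complex Hessian at every such point; equivalently, the matrix given by −2·H_τ = 2·h''(|x|²)·x·xᵀ + h'(|x|²)·I_n − A is negative definite. -/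
open Matrix

/-- If `A ≥ λ₁ Iₙ` is symmetric, `p = h'(|x|²) < λ₁` and `2|x|² h''(|x|²) + h'(|x|²) < λ₁`,
then the matrix `2 h'' · x xᵀ + h' · Iₙ − A` (which equals `−2 H_τ` for
`τ(z) = ⟨Ay,y⟩ − h(|x|²)`) is negative definite. -/
theorem stmt_7 {n : ℕ} (A : Matrix (Fin n) (Fin n) ℝ) (hA : A.IsSymm)
    (lam : ℝ) (hlam : 0 < lam)
    (hAge : ∀ v : Fin n → ℝ, lam * (v ⬝ᵥ v) ≤ v ⬝ᵥ A.mulVec v)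
    (x : Fin n → ℝ) (p q : ℝ)
    (hp : p < lam) (hq : 2 * (x ⬝ᵥ x) * q + p < lam) :
    ∀ v : Fin n → ℝ, v ≠ 0 →
      v ⬝ᵥ (((2 * q) • Matrix.vecMulVec x x + p • (1 : Matrix (Fin n) (Fin n) ℝ)
        - A).mulVec v) < 0 := by
  intro v hv
  have hnn : ∀ w : Fin n → ℝ, 0 ≤ w ⬝ᵥ w := fun w =>
    Finset.sum_nonneg fun i _ => mul_self_nonneg _
  have hvv : 0 < v ⬝ᵥ v := by
    rcases lt_or_eq_of_le (hnn v) with h | h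
    · exact h
    · exact absurd (dotProduct_self_eq_zero.mp h.symm) hv
  have key : v ⬝ᵥ (((2 * q) • Matrix.vecMulVec x x + p • (1 : Matrix (Fin n) (Fin n) ℝ)
        - A).mulVec v)
      = 2 * q * ((x ⬝ᵥ v) * (x ⬝ᵥ v)) + p * (v ⬝ᵥ v) - v ⬝ᵥ A.mulVec v := by
    rw [sub_mulVec, add_mulVec, smul_mulVec, smul_mulVec, one_mulVec,
      dotProduct_sub, dotProduct_add, dotProduct_smul, dotProduct_smul]
    simp only [smul_eq_mul]
    congr 2
    simp [vecMulVec, mulVec, dotProduct, Finset.mul_sum, Finset.sum_mul]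
    apply Finset.sum_congr rfl; intro i _
    apply Finset.sum_congr rfl; intro j _
    ring
  rw [key]
  have hcs : (x ⬝ᵥ v) * (x ⬝ᵥ v) ≤ (x ⬝ᵥ x) * (v ⬝ᵥ v) := by
    have := Finset.sum_mul_sq_le_sq_mul_sq Finset.univ x v
    simpa [dotProduct, sq] using this
  have hxx : (0:ℝ) ≤ x ⬝ᵥ x := hnn x
  have hA' : lam * (v ⬝ᵥ v) ≤ v ⬝ᵥ A.mulVec v := hAge v
  rcases le_or_gt 0 q with hq0 | hq0
  · have h1 : 2 * q * ((x ⬝ᵥ v) * (x ⬝ᵥ v)) ≤ 2 * q * ((x ⬝ᵥ x) * (v ⬝ᵥ v)) := by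
      apply mul_le_mul_of_nonneg_left hcs (by linarith)
    nlinarith
  · have h1 : 2 * q * ((x ⬝ᵥ v) * (x ⬝ᵥ v)) ≤ 0 := by
      apply mul_nonpos_of_nonpos_of_nonneg (by linarith) (mul_self_nonneg _)
    nlinarith
end

section
/- Fix constants 0 < t₀ < c₀ and μ > 1 with t₀ = (1 − 1/μ)²·c₀. Define ξ : ℝ → ℝ by ξ(t) = 0 for t ≤ t₀, ξ(t) = μ·(√t − √t₀)² for t₀ ≤ t ≤ c₀, and ξ(t) = t − c₀·(1 − 1/μ) for t ≥ c₀. Then ξ is continuously differentiable on ℝ, ξ is convex and nondecreasing, ξ'(c₀) = 1, and on the open interval (t₀, c₀) it satisfies the differential equation 2t·ξ''(t) + ξ'(t) = μ with ξ(t₀) = ξ'(t₀) = 0. -/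
/-!
On `[t₀, c₀]` the slope of `ξ` is `μ (1 - √t₀ / √t)`. It vanishes at `t₀`, and since
`√t₀ = (1 - 1/μ) √c₀` it equals `1` at `c₀`: the slopes of the neighbouring pieces. So `ξ'` is
this slope evaluated at `t` clamped to `[t₀, c₀]`, a continuous, nondecreasing, nonnegative
function, which gives `C¹`, convexity and monotonicity. On `(t₀, c₀)`,
`ξ'' = μ √t₀ / (2 t √t)`, whence the ODE.
-/

open Real Set Filter Topology

theorem HasDerivAt.of_eventuallyEq_nhdsLE_nhdsGE {F : Type*} [NormedAddCommGroup F]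
    [NormedSpace ℝ F] {f u v : ℝ → F} {d : F} {a : ℝ} (hu : HasDerivAt u d a)
    (hv : HasDerivAt v d a) (hfu : f =ᶠ[𝓝[≤] a] u) (hfv : f =ᶠ[𝓝[≥] a] v) :
    HasDerivAt f d a := by
  have hl := hu.hasDerivWithinAt.congr_of_eventuallyEq hfu (hfu.eq_of_nhdsWithin self_mem_Iic)
  have hr := hv.hasDerivWithinAt.congr_of_eventuallyEq hfv (hfv.eq_of_nhdsWithin self_mem_Ici)
  rw [← hasDerivWithinAt_univ, ← Iic_union_Ici]
  exact hl.union hr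

section SqrtProfile

variable (μ a : ℝ) {t : ℝ}

theorem hasDerivAt_mul_sqrt_sub_sqrt_sq (ht : 0 < t) :
    HasDerivAt (fun s => μ * (√s - √a) ^ 2) (μ * (1 - √a / √t)) t := by
  refine ((((hasDerivAt_sqrt ht.ne').sub_const (√a)).pow 2).const_mul μ).congr_deriv ?_
  field_simp [(sqrt_pos.2 ht).ne']
  ring

theorem hasDerivAt_mul_one_sub_sqrt_div_sqrt (ht : 0 < t) :
    HasDerivAt (fun s => μ * (1 - √a / √s)) (μ * √a / (2 * t * √t)) t := by
  have hs : √t ≠ 0 := (sqrt_pos.2 ht).ne'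
  refine ((((hasDerivAt_const t (√a)).div (hasDerivAt_sqrt ht.ne') hs).const_sub 1).const_mul
    μ).congr_deriv ?_
  rw [sq_sqrt ht.le]
  field_simp
  ring

end SqrtProfile

theorem mul_one_sub_sqrt_div_sqrt_eq_one {μ c : ℝ} (hμ : 1 ≤ μ) (hc : 0 < c) :
    μ * (1 - √((1 - 1 / μ) ^ 2 * c) / √c) = 1 := by
  have h : 0 ≤ 1 - 1 / μ := by
    rw [sub_nonneg]; exact div_le_one_of_le₀ hμ (by linarith)
  rw [sqrt_mul (sq_nonneg _), sqrt_sq h, mul_div_assoc, div_self (sqrt_pos.2 hc).ne']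
  field_simp
  ring

noncomputable def xiDeriv (μ t₀ c₀ t : ℝ) : ℝ := μ * (1 - √t₀ / √(max t₀ (min t c₀)))

section XiDeriv

variable {μ t₀ c₀ t : ℝ}

theorem xiDeriv_of_le (ht₀ : 0 < t₀) (hc : t₀ ≤ c₀) (ht : t ≤ t₀) : xiDeriv μ t₀ c₀ t = 0 := by
  rw [xiDeriv, min_eq_left (ht.trans hc), max_eq_left ht, div_self (sqrt_pos.2 ht₀).ne']
  ring

theorem xiDeriv_of_mem_Icc (ht : t ∈ Icc t₀ c₀) : xiDeriv μ t₀ c₀ t = μ * (1 - √t₀ / √t) := by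
  rw [xiDeriv, min_eq_left ht.2, max_eq_right ht.1]

theorem xiDeriv_of_ge (hc : t₀ ≤ c₀) (ht : c₀ ≤ t) :
    xiDeriv μ t₀ c₀ t = μ * (1 - √t₀ / √c₀) := by
  rw [xiDeriv, min_eq_right ht, max_eq_right hc]

theorem continuous_xiDeriv (ht₀ : 0 < t₀) : Continuous (xiDeriv μ t₀ c₀) := by
  refine continuous_const.mul (continuous_const.sub (continuous_const.div ?_ fun t => ?_))
  · fun_prop
  · exact (sqrt_pos.2 (ht₀.trans_le (le_max_left _ _))).ne'

theorem monotone_xiDeriv (hμ : 0 ≤ μ) (ht₀ : 0 < t₀) : Monotone (xiDeriv μ t₀ c₀) := by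
  intro s t hst
  have hpos : 0 < √(max t₀ (min s c₀)) := sqrt_pos.2 (ht₀.trans_le (le_max_left _ _))
  unfold xiDeriv
  gcongr

theorem xiDeriv_nonneg (hμ : 0 ≤ μ) : 0 ≤ xiDeriv μ t₀ c₀ t := by
  refine mul_nonneg hμ (sub_nonneg.2 (div_le_one_of_le₀ ?_ (sqrt_nonneg _)))
  exact sqrt_le_sqrt (le_max_left _ _)

theorem hasDerivAt_xiDeriv {ξ : ℝ → ℝ} {b : ℝ} (ht₀ : 0 < t₀) (hc : t₀ < c₀)
    (hslope : μ * (1 - √t₀ / √c₀) = 1) (h1 : ∀ t ≤ t₀, ξ t = 0)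
    (h2 : ∀ t, t₀ ≤ t → t ≤ c₀ → ξ t = μ * (√t - √t₀) ^ 2) (h3 : ∀ t, c₀ ≤ t → ξ t = t - b)
    (t : ℝ) : HasDerivAt ξ (xiDeriv μ t₀ c₀ t) t := by
  have hmid : ∀ {s}, 0 < s → HasDerivAt _ (μ * (1 - √t₀ / √s)) s :=
    hasDerivAt_mul_sqrt_sub_sqrt_sq μ t₀
  have hlin : HasDerivAt (fun s => s - b) 1 t := (hasDerivAt_id t).sub_const b
  rcases lt_trichotomy t t₀ with h | rfl | h
  · rw [xiDeriv_of_le ht₀ hc.le h.le]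
    refine (hasDerivAt_const t 0).congr_of_eventuallyEq ?_
    filter_upwards [Iio_mem_nhds h] with s hs using h1 s hs.le
  · rw [xiDeriv_of_le ht₀ hc.le le_rfl]
    refine (hasDerivAt_const t 0).of_eventuallyEq_nhdsLE_nhdsGE
      (by simpa [div_self (sqrt_pos.2 ht₀).ne'] using hmid ht₀) ?_ ?_
    · filter_upwards [self_mem_nhdsWithin] with s hs using h1 s hs
    · filter_upwards [Icc_mem_nhdsGE hc] with s hs using h2 s hs.1 hs.2
  rcases lt_trichotomy t c₀ with h' | rfl | h'
  · rw [xiDeriv_of_mem_Icc ⟨h.le, h'.le⟩]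
    refine (hmid (ht₀.trans h)).congr_of_eventuallyEq ?_
    filter_upwards [Ioo_mem_nhds h h'] with s hs using h2 s hs.1.le hs.2.le
  · rw [xiDeriv_of_ge hc.le le_rfl, hslope]
    refine (hslope ▸ hmid (ht₀.trans h)).of_eventuallyEq_nhdsLE_nhdsGE hlin ?_ ?_
    · filter_upwards [Icc_mem_nhdsLE h] with s hs using h2 s hs.1 hs.2
    · filter_upwards [self_mem_nhdsWithin] with s hs using h3 s hs
  · rw [xiDeriv_of_ge hc.le h'.le, hslope]
    refine hlin.congr_of_eventuallyEq ?_
    filter_upwards [Ioi_mem_nhds h'] with s hs using h3 s hs.le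

end XiDeriv

/-- Properties of the piecewise function `ξ`: it is `C¹`, convex, nondecreasing,
`ξ'(c₀) = 1`, it solves `2t ξ'' + ξ' = μ` on `(t₀, c₀)`, and `ξ(t₀) = ξ'(t₀) = 0`. -/
theorem stmt_9 (c₀ μ t₀ : ℝ) (hc₀ : 0 < c₀) (hμ : 1 < μ)
    (ht₀ : t₀ = (1 - 1 / μ) ^ 2 * c₀)
    (ξ : ℝ → ℝ)
    (h1 : ∀ t ≤ t₀, ξ t = 0)
    (h2 : ∀ t, t₀ ≤ t → t ≤ c₀ → ξ t = μ * (Real.sqrt t - Real.sqrt t₀) ^ 2)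
    (h3 : ∀ t, c₀ ≤ t → ξ t = t - c₀ * (1 - 1 / μ)) :
    ContDiff ℝ 1 ξ ∧ ConvexOn ℝ Set.univ ξ ∧ Monotone ξ ∧ deriv ξ c₀ = 1 ∧
      (∀ t ∈ Set.Ioo t₀ c₀, 2 * t * deriv (deriv ξ) t + deriv ξ t = μ) ∧
      ξ t₀ = 0 ∧ deriv ξ t₀ = 0 := by
  have h1μ : 0 < 1 - 1 / μ := by simpa using inv_lt_one_of_one_lt₀ hμ
  have hq : (1 - 1 / μ) ^ 2 < 1 := pow_lt_one₀ h1μ.le (by simp; linarith) two_ne_zero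
  have ht₀pos : 0 < t₀ := by rw [ht₀]; positivity
  have hc : t₀ < c₀ := by rw [ht₀]; simpa using mul_lt_mul_of_pos_right hq hc₀
  have hslope : μ * (1 - √t₀ / √c₀) = 1 := ht₀ ▸ mul_one_sub_sqrt_div_sqrt_eq_one hμ.le hc₀
  have hξ := hasDerivAt_xiDeriv ht₀pos hc hslope h1 h2 h3
  have hdiff : Differentiable ℝ ξ := fun t => (hξ t).differentiableAt
  have hderiv : deriv ξ = xiDeriv μ t₀ c₀ := funext fun t => (hξ t).deriv
  refine ⟨contDiff_one_iff_deriv.2 ⟨hdiff, hderiv ▸ continuous_xiDeriv ht₀pos⟩,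
    Monotone.convexOn_univ_of_deriv hdiff (hderiv ▸ monotone_xiDeriv (by linarith) ht₀pos),
    monotone_of_deriv_nonneg hdiff fun t => hderiv ▸ xiDeriv_nonneg (by linarith),
    hderiv ▸ (xiDeriv_of_ge hc.le le_rfl).trans hslope, fun t ht => ?_, h1 t₀ le_rfl,
    hderiv ▸ xiDeriv_of_le ht₀pos hc.le le_rfl⟩
  have htpos : 0 < t := ht₀pos.trans ht.1
  have hloc : deriv ξ =ᶠ[𝓝 t] fun s => μ * (1 - √t₀ / √s) := by
    rw [hderiv]
    filter_upwards [Ioo_mem_nhds ht.1 ht.2] with s hs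
    exact xiDeriv_of_mem_Icc (Ioo_subset_Icc_self hs)
  rw [hloc.deriv_eq, (hasDerivAt_mul_one_sub_sqrt_div_sqrt μ t₀ htpos).deriv, hloc.eq_of_nhds]
  field_simp [(sqrt_pos.2 htpos).ne']
  ring
end
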